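/- arXiv:1609.04098 — 2 statements merged into one kernel-verified Lean document; each statement's English description precedes it below -/
import Mathlib

section
/- Let σ=(Σ_i)_{i∈[k]} be a trace alphabet and κ, κ' capacity functions for k buffers. Suppose there exist i ∈ [k] and letters a, b ∈ Σ such that σ(a) = {i}, σ(a) ∩ σ(b) = ∅, κ(i) ∈ ℕ is finite and κ(i) < κ'(i). Then there exist nondeterministic Büchi automata A and B over Σ such that A ⋢^κ_σ B (Duplicator has no winning strategy in G^κ_σ(A,B); indeed Spoiler wins) but A ⊑^{κ'}_σ B. -/
/-!
With `N = κ i`, let Spoiler's automaton accept only `a^(N+1) b^ω` and Duplicator's only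
`b a^(N+1) b^ω`; both are deterministic, so Spoiler's play is forced. Duplicator has to start
with `b`, which lives in a buffer other than `i` that stays empty while Spoiler plays `a`s,
so she must skip and the `N + 1` leading `a`s overflow buffer `i`. With one more slot she
waits for the first `b`, reads it together with all the `a`s, and from then on reads every
`b` one round after it was played.
-/

open Classical

noncomputable section

namespace MultiBuffer

/-! ### Nondeterministic Büchi automata -/

/-- A nondeterministic Büchi automaton over the alphabet `α`. -/
structure NBA (α : Type) : Type 1 where
  Q : Type
  finQ : Fintype Q
  init : Q
  δ : Q → α → Set Q
  F : Set Q

variable {α P Q : Type} {k : ℕ}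

/-- `r` is (the state sequence of) a run of `A` on the infinite word `w`. -/
def IsRun (A : NBA α) (w : ℕ → α) (r : ℕ → A.Q) : Prop :=
  r 0 = A.init ∧ ∀ n, r (n + 1) ∈ A.δ (r n) (w n)

/-- The state sequence `r` visits accepting states infinitely often. -/
def AcceptingStates (A : NBA α) (r : ℕ → A.Q) : Prop :=
  {n | r n ∈ A.F}.Infinite

/-- The ω-language of a Büchi automaton. -/
def Lang (A : NBA α) : Set (ℕ → α) :=
  {w | ∃ r, IsRun A w r ∧ AcceptingStates A r}

/-! ### Finite or infinite words, projections and trace equivalence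

A finite or infinite word over `α` is represented as a function `ℕ → Option α`
which is `none` from some point on (if finite); infinite words embed via `ofInf`. -/

/-- The infinite word `u` viewed as an element of `Σ^∞`. -/
def ofInf (u : ℕ → α) : ℕ → Option α := fun n => some (u n)

/-- A function `ℕ → Option α` represents a finite or infinite word if after the
first `none` everything is `none`. -/
def Stable (w : ℕ → Option α) : Prop := ∀ n, w n = none → w (n + 1) = none

/-- The number of `i < j` satisfying `p`. -/
def countBelow (p : ℕ → Prop) (j : ℕ) : ℕ := {i | i < j ∧ p i}.ncard

/-- Position `j` of the word `w` carries a letter belonging to `S`. -/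
def InS (S : Set α) (w : ℕ → Option α) (j : ℕ) : Prop := ∃ a ∈ S, w j = some a

/-- The projection `π_S(w)` of the word `w` to the subalphabet `S`: the word obtained
from `w` by deleting all letters not in `S`. -/
def proj (S : Set α) (w : ℕ → Option α) (n : ℕ) : Option α :=
  if h : ∃ j, InS S w j ∧ countBelow (InS S w) j = n then w h.choose else none

/-- Trace equivalence of (finite or infinite) words w.r.t. the trace alphabet
`σ = (Σ_i)_{i ∈ [k]}` : all projections coincide. -/
def TraceEquiv (σ : Fin k → Set α) (u v : ℕ → Option α) : Prop :=
  ∀ i, proj (σ i) u = proj (σ i) v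

/-- The trace closure of a language of infinite words. -/
def closure (σ : Fin k → Set α) (L : Set (ℕ → α)) : Set (ℕ → α) :=
  {v | ∃ u ∈ L, TraceEquiv σ (ofInf u) (ofInf v)}

/-! ### The multi-buffer game -/

/-- A configuration of the multi-buffer game: a state of Spoiler's automaton,
the contents of the `k` buffers, and a state of Duplicator's automaton. -/
structure Conf (α P Q : Type) (k : ℕ) where
  p : P
  bufs : Fin k → List α
  q : Q

/-- Appending the letter `a` to the back of every buffer `i` with `a ∈ σ i`. -/
def push (σ : Fin k → Set α) (bufs : Fin k → List α) (a : α) : Fin k → List α :=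
  fun i => if a ∈ σ i then bufs i ++ [a] else bufs i

/-- Popping the letter `b` from the front of every buffer `i` with `b ∈ σ i`. -/
def pop (σ : Fin k → Set α) (bufs : Fin k → List α) (b : α) : Fin k → List α :=
  fun i => if b ∈ σ i then (bufs i).tail else bufs i

/-- Effect of a Spoiler move `m = (a, p')` on a configuration. -/
def spApply (σ : Fin k → Set α) (c : Conf α P Q k) (m : α × P) : Conf α P Q k :=
  ⟨m.2, push σ c.bufs m.1, c.q⟩

/-- Effect of a (possibly empty) Duplicator move `d = (b₁,q₁)...(b_n,q_n)`. -/
def dupApply (σ : Fin k → Set α) (c : Conf α P Q k) (d : List (α × Q)) : Conf α P Q k :=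
  ⟨c.p, d.foldl (fun bs m => pop σ bs m.1) c.bufs, ((d.getLast?).map Prod.snd).getD c.q⟩

/-- Legality of a Spoiler move: it follows a transition of his automaton. -/
def SpLegal (δA : P → α → Set P) (c : Conf α P Q k) (m : α × P) : Prop :=
  m.2 ∈ δA c.p m.1

/-- Legality of a Duplicator move from a configuration: the moves form a run of her
automaton and each letter is removed from the front of the corresponding buffers. -/
def DupLegal (σ : Fin k → Set α) (δB : Q → α → Set Q) :
    Conf α P Q k → List (α × Q) → Prop
  | _, [] => True
  | c, m :: rest =>
      m.2 ∈ δB c.q m.1 ∧ (∀ i, m.1 ∈ σ i → (c.bufs i).head? = some m.1) ∧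
      DupLegal σ δB ⟨c.p, pop σ c.bufs m.1, m.2⟩ rest

/-- The capacity constraints (checked after a full round). -/
def CapOk (κ : Fin k → ℕ∞) (c : Conf α P Q k) : Prop :=
  ∀ i, ((c.bufs i).length : ℕ∞) ≤ κ i

/-- The list of the first `n` values of the sequence `s`. -/
def hist {β : Type} (s : ℕ → β) (n : ℕ) : List β := List.ofFn (fun i : Fin n => s i)

/-- The configuration of the play after `n` full rounds, when Spoiler plays the
sequence `s` of moves and Duplicator follows the strategy `θ` (which maps the
history of Spoiler moves, including the current one, to her response). -/
def playConf (σ : Fin k → Set α) (θ : List (α × P) → List (α × Q))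
    (c0 : Conf α P Q k) (s : ℕ → α × P) : ℕ → Conf α P Q k
  | 0 => c0
  | n + 1 => dupApply σ (spApply σ (playConf σ θ c0 s n) (s n)) (θ (hist s (n + 1)))

/-- Duplicator's response in round `n`. -/
def resp (θ : List (α × P) → List (α × Q)) (s : ℕ → α × P) (n : ℕ) : List (α × Q) :=
  θ (hist s (n + 1))

/-- Spoiler's move in round `n` is legal. -/
def SpLegalAt (σ : Fin k → Set α) (δA : P → α → Set P) (θ : List (α × P) → List (α × Q))
    (c0 : Conf α P Q k) (s : ℕ → α × P) (n : ℕ) : Prop :=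
  SpLegal δA (playConf σ θ c0 s n) (s n)

/-- Duplicator's response in round `n` is legal and the capacities are respected
after the round. -/
def DupOkAt (σ : Fin k → Set α) (κ : Fin k → ℕ∞) (δB : Q → α → Set Q)
    (θ : List (α × P) → List (α × Q)) (c0 : Conf α P Q k) (s : ℕ → α × P) (n : ℕ) : Prop :=
  DupLegal σ δB (spApply σ (playConf σ θ c0 s n) (s n)) (resp θ s n) ∧
  CapOk κ (playConf σ θ c0 s (n + 1))

/-- The number of occurrences of the letter `a` in Spoiler's word. -/
def spOcc (s : ℕ → α × P) (a : α) : ℕ∞ := {n | (s n).1 = a}.encard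

/-- The number of occurrences of the letter `a` in Duplicator's word. -/
def dupOcc (θ : List (α × P) → List (α × Q)) (s : ℕ → α × P) (a : α) : ℕ∞ :=
  {x : ℕ × ℕ | ∃ m, (resp θ s x.1)[x.2]? = some m ∧ m.1 = a}.encard

/-- Spoiler's run is accepting. -/
def SpAccept (FA : Set P) (s : ℕ → α × P) : Prop := {n | (s n).2 ∈ FA}.Infinite

/-- Duplicator's run is (infinite and) accepting. -/
def DupAccept (FB : Set Q) (θ : List (α × P) → List (α × Q)) (s : ℕ → α × P) : Prop :=
  {n | ∃ m ∈ resp θ s n, m.2 ∈ FB}.Infinite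

/-- Duplicator has a winning strategy in the multi-buffer game (with buffer alphabets
`σ`, capacities `κ`) played on the transition structures `δA`, `δB` with acceptance
sets `FA`, `FB`, starting from the configuration `c0`: she always has legal responses
(as long as Spoiler has played legally), and if the resulting infinite play carries an
accepting run of Spoiler then her own run is infinite and accepting and every letter
occurs equally often in both words (i.e. every letter put into a buffer is eventually
read). Finite plays in which a player is stuck are lost by that player. -/
def DupWinsFrom (σ : Fin k → Set α) (κ : Fin k → ℕ∞) (δA : P → α → Set P)
    (δB : Q → α → Set Q) (FA : Set P) (FB : Set Q) (c0 : Conf α P Q k) : Prop :=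
  ∃ θ : List (α × P) → List (α × Q),
    ∀ s : ℕ → α × P,
      (∀ n, (∀ m ≤ n, SpLegalAt σ δA θ c0 s m) → DupOkAt σ κ δB θ c0 s n) ∧
      ((∀ n, SpLegalAt σ δA θ c0 s n) → SpAccept FA s →
        DupAccept FB θ s ∧ ∀ a : α, spOcc s a = dupOcc θ s a)

/-- The multi-buffer simulation `A ⊑^κ_σ B`. -/
def Simu (σ : Fin k → Set α) (κ : Fin k → ℕ∞) (A B : NBA α) : Prop :=
  DupWinsFrom σ κ A.δ B.δ A.F B.F ⟨A.init, fun _ => [], B.init⟩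

section Game

variable (σ : Fin k → Set α)

lemma playConf_succ (θ : List (α × P) → List (α × Q)) (c0 : Conf α P Q k) (s : ℕ → α × P)
    (n : ℕ) :
    playConf σ θ c0 s (n + 1) = dupApply σ (spApply σ (playConf σ θ c0 s n) (s n)) (resp θ s n) :=
  rfl

lemma resp_congr (θ : List (α × P) → List (α × Q)) {s s' : ℕ → α × P} {n : ℕ}
    (h : ∀ m ≤ n, s m = s' m) : resp θ s n = resp θ s' n := by
  unfold resp hist
  congr 2
  funext m
  exact h m (Nat.lt_succ_iff.mp m.isLt)

lemma playConf_congr (θ : List (α × P) → List (α × Q)) (c0 : Conf α P Q k) {s s' : ℕ → α × P}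
    {n : ℕ} (h : ∀ m < n, s m = s' m) : playConf σ θ c0 s n = playConf σ θ c0 s' n := by
  induction n with
  | zero => rfl
  | succ n ih =>
    rw [playConf_succ, playConf_succ, ih fun m hm => h m (by omega), h n n.lt_succ_self,
      resp_congr θ fun m hm => h m (by omega)]

lemma dupOkAt_congr (κ : Fin k → ℕ∞) (δB : Q → α → Set Q) (θ : List (α × P) → List (α × Q))
    (c0 : Conf α P Q k) {s s' : ℕ → α × P} {n : ℕ} (h : ∀ m ≤ n, s m = s' m) :
    DupOkAt σ κ δB θ c0 s n ↔ DupOkAt σ κ δB θ c0 s' n := by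
  unfold DupOkAt
  rw [playConf_congr σ θ c0 fun m hm => h m hm.le, playConf_congr σ θ c0 (n := n + 1)
      fun m hm => h m (by omega), h n le_rfl, resp_congr θ h]

lemma dupWinsFrom_of_forced (κ : Fin k → ℕ∞) (δA : P → α → Set P) (δB : Q → α → Set Q)
    (FA : Set P) (FB : Set Q) (c0 : Conf α P Q k) (θ : List (α × P) → List (α × Q))
    (s₀ : ℕ → α × P)
    (hforced : ∀ s n, (∀ m ≤ n, SpLegalAt σ δA θ c0 s m) → ∀ m ≤ n, s m = s₀ m)
    (hok : ∀ n, DupOkAt σ κ δB θ c0 s₀ n)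
    (hwin : SpAccept FA s₀ → DupAccept FB θ s₀ ∧ ∀ x, spOcc s₀ x = dupOcc θ s₀ x) :
    DupWinsFrom σ κ δA δB FA FB c0 := by
  refine ⟨θ, fun s => ⟨fun n hleg => ?_, fun hleg hacc => ?_⟩⟩
  · exact (dupOkAt_congr σ κ δB θ c0 (hforced s n hleg)).2 (hok n)
  · obtain rfl : s = s₀ := funext fun n => hforced s n (fun m _ => hleg m) n le_rfl
    exact hwin hacc

/-- `e n = (r, t)` says that Spoiler's `n`-th letter is the `t`-th one Duplicator reads in
round `r`. -/
lemma spOcc_eq_dupOcc_of_reindex (θ : List (α × P) → List (α × Q)) (s : ℕ → α × P)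
    (e : ℕ → ℕ × ℕ) (he : e.Injective)
    (hletter : ∀ n, ((resp θ s (e n).1)[(e n).2]?).map Prod.fst = some (s n).1)
    (hsurj : ∀ r t m, (resp θ s r)[t]? = some m → ∃ n, e n = (r, t)) (x : α) :
    spOcc s x = dupOcc θ s x := by
  unfold spOcc dupOcc
  rw [← he.encard_image]
  congr 1
  ext ⟨r, t⟩
  constructor
  · rintro ⟨n, rfl, hn⟩
    rw [← hn]
    exact Option.map_eq_some_iff.mp (hletter n)
  · rintro ⟨m, hm, rfl⟩
    obtain ⟨n, hn⟩ := hsurj r t m hm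
    have := hletter n
    rw [hn] at this
    simp only [hm, Option.map_some, Option.some.injEq] at this
    exact ⟨n, this.symm, hn⟩

lemma dupApply_cons (c : Conf α P Q k) (m : α × Q) (d : List (α × Q)) :
    dupApply σ c (m :: d) = dupApply σ ⟨c.p, pop σ c.bufs m.1, m.2⟩ d := by
  simp only [dupApply, List.foldl_cons, List.getLast?_cons]
  cases d.getLast? <;> rfl

lemma dupApply_append (d₁ d₂ : List (α × Q)) (c : Conf α P Q k) :
    dupApply σ c (d₁ ++ d₂) = dupApply σ (dupApply σ c d₁) d₂ := by
  induction d₁ generalizing c with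
  | nil => rfl
  | cons m d₁ ih => simp only [List.cons_append, dupApply_cons, ih]

lemma dupLegal_append (δB : Q → α → Set Q) (d₁ d₂ : List (α × Q)) (c : Conf α P Q k) :
    DupLegal σ δB c (d₁ ++ d₂) ↔ DupLegal σ δB c d₁ ∧ DupLegal σ δB (dupApply σ c d₁) d₂ := by
  induction d₁ generalizing c with
  | nil => exact (and_iff_right trivial).symm
  | cons m d₁ ih => simp only [List.cons_append, DupLegal, dupApply_cons, ih, and_assoc]

lemma eq_nil_of_dupLegal {δB : Q → α → Set Q} {c : Conf α P Q k} {d : List (α × Q)} {j : Fin k}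
    (hj : c.bufs j = []) (hδ : ∀ x q', q' ∈ δB c.q x → x ∈ σ j) (h : DupLegal σ δB c d) :
    d = [] := by
  cases d with
  | nil => rfl
  | cons m d => simpa [hj] using h.2.1 j (hδ _ _ h.1)

lemma playConf_of_skip {i : Fin k} {x : α} (hx : ∀ j, x ∈ σ j ↔ j = i)
    (θ : List (α × P) → List (α × Q)) (c0 : Conf α P Q k) (hc0 : c0.bufs = fun _ => [])
    (s : ℕ → α × P) {n : ℕ} (hs : ∀ m < n, (s m).1 = x) (hskip : ∀ m < n, resp θ s m = []) :
    (playConf σ θ c0 s n).bufs = Function.update (fun _ => []) i (List.replicate n x) ∧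
      (playConf σ θ c0 s n).q = c0.q := by
  induction n with
  | zero => simpa [playConf] using hc0
  | succ n ih =>
    obtain ⟨hbufs, hq⟩ := ih (fun m hm => hs m (by omega)) (fun m hm => hskip m (by omega))
    rw [playConf_succ, hskip n n.lt_succ_self]
    refine ⟨?_, hq⟩
    funext j
    simp only [dupApply, List.foldl_nil, spApply, push, hbufs, hs n n.lt_succ_self, hx]
    by_cases hj : j = i
    · subst hj; simp [List.replicate_succ']
    · simp [hj]

end Game

section WordNBA

/-- Accepts exactly `w` when `w` is constant from position `n` on. -/
abbrev wordNBA (n : ℕ) (w : ℕ → α) : NBA α where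
  Q := Fin (n + 1)
  finQ := inferInstance
  init := 0
  δ q x := {q' | x = w q ∧ (q' : ℕ) = min ((q : ℕ) + 1) n}
  F := {Fin.last n}

def runMove (n : ℕ) (w : ℕ → α) (t : ℕ) : α × Fin (n + 1) := (w t, Fin.clamp (t + 1) n)

def runSegment (n : ℕ) (w : ℕ → α) (lo len : ℕ) : List (α × Fin (n + 1)) :=
  (List.range' lo len).map (runMove n w)

variable {n : ℕ} {w : ℕ → α}

lemma runSegment_append (lo len₁ len₂ : ℕ) :
    runSegment n w lo (len₁ + len₂) =
      runSegment n w lo len₁ ++ runSegment n w (lo + len₁) len₂ := by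
  rw [runSegment, runSegment, runSegment, ← List.map_append,
    show lo + len₁ = lo + 1 * len₁ by ring, List.range'_append]

lemma getElem?_runSegment (lo len t : ℕ) :
    (runSegment n w lo len)[t]? = if t < len then some (runMove n w (lo + t)) else none := by
  split_ifs with h
  · simp [runSegment, List.getElem?_range' h]
  · simp only [runSegment, List.getElem?_eq_none_iff, List.length_map, List.length_range']
    omega

lemma mem_δ_clamp_iff (hw : ∀ t, n ≤ t → w t = w n) (t : ℕ) (m : α × Fin (n + 1)) :
    m.2 ∈ (wordNBA n w).δ (Fin.clamp t n) m.1 ↔ m = runMove n w t := by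
  have hwt : w (min t n) = w t := by
    rcases le_total t n with h | h
    · rw [min_eq_left h]
    · rw [min_eq_right h, hw t h]
  obtain ⟨x, q⟩ := m
  simp only [wordNBA, runMove, Fin.coe_clamp, hwt, Prod.mk.injEq, Fin.ext_iff]
  rw [show min (min t n + 1) n = min (t + 1) n by omega]
  exact Iff.rfl

variable (σ : Fin k → Set α)

lemma spLegalAt_wordNBA_iff (hw : ∀ t, n ≤ t → w t = w n)
    (θ : List (α × Fin (n + 1)) → List (α × Q)) (c0 : Conf α (Fin (n + 1)) Q k)
    (hc0 : c0.p = (wordNBA n w).init) {s : ℕ → α × Fin (n + 1)}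
    {t : ℕ} (hs : ∀ m < t, s m = runMove n w m) :
    SpLegalAt σ (wordNBA n w).δ θ c0 s t ↔ s t = runMove n w t := by
  have hp : (playConf σ θ c0 s t).p = Fin.clamp t n := by
    cases t with
    | zero => ext; simp [playConf, hc0]
    | succ m => rw [playConf_succ, hs m m.lt_succ_self]; rfl
  unfold SpLegalAt SpLegal
  rw [hp]
  exact mem_δ_clamp_iff hw t (s t)

lemma eq_runMove_of_spLegalAt (hw : ∀ t, n ≤ t → w t = w n)
    (θ : List (α × Fin (n + 1)) → List (α × Q)) (c0 : Conf α (Fin (n + 1)) Q k)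
    (hc0 : c0.p = (wordNBA n w).init) (s : ℕ → α × Fin (n + 1)) (t : ℕ)
    (hleg : ∀ m ≤ t, SpLegalAt σ (wordNBA n w).δ θ c0 s m) : ∀ m ≤ t, s m = runMove n w m := by
  intro m hm
  induction m using Nat.strong_induction_on with
  | _ m ih =>
    exact (spLegalAt_wordNBA_iff σ hw θ c0 hc0 fun m' hm' => ih m' hm' (by omega)).1 (hleg m hm)

lemma spLegalAt_runMove (hw : ∀ t, n ≤ t → w t = w n)
    (θ : List (α × Fin (n + 1)) → List (α × Q)) (c0 : Conf α (Fin (n + 1)) Q k)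
    (hc0 : c0.p = (wordNBA n w).init) (t : ℕ) :
    SpLegalAt σ (wordNBA n w).δ θ c0 (runMove n w) t :=
  (spLegalAt_wordNBA_iff σ hw θ c0 hc0 fun _ _ => rfl).2 rfl

lemma dupLegal_runSegment (hw : ∀ t, n ≤ t → w t = w n) {x : α} {lo len : ℕ}
    (hx : ∀ t, lo ≤ t → t < lo + len → w t = x) (c : Conf α P (Fin (n + 1)) k)
    (hbufs : ∀ j, x ∈ σ j → c.bufs j = List.replicate len x) (hq : c.q = Fin.clamp lo n) :
    DupLegal σ (wordNBA n w).δ c (runSegment n w lo len) ∧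
      dupApply σ c (runSegment n w lo len) =
        ⟨c.p, fun j => if x ∈ σ j then [] else c.bufs j, Fin.clamp (lo + len) n⟩ := by
  induction len generalizing lo c with
  | zero =>
    refine ⟨trivial, ?_⟩
    obtain ⟨p, bufs, q⟩ := c
    simp only [runSegment, List.range'_zero, List.map_nil, dupApply, List.foldl_nil,
      List.getLast?_nil, Option.map_none, Option.getD_none, Nat.add_zero] at hq hbufs ⊢
    subst hq
    congr
    funext j
    split_ifs with h
    · simpa using (hbufs j h).symm
    · rfl
  | succ len ih =>
    have hxlo : w lo = x := hx lo le_rfl (by omega)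
    have hstep := (mem_δ_clamp_iff hw lo (runMove n w lo)).2 rfl
    rw [← hq] at hstep
    obtain ⟨hlegal, happly⟩ := ih (lo := lo + 1) (fun t h₁ h₂ => hx t (by omega) (by omega))
      ⟨c.p, pop σ c.bufs x, Fin.clamp (lo + 1) n⟩
      (fun j hj => by simp [pop, hj, hbufs j hj, List.replicate_succ]) rfl
    simp only [runSegment, List.range'_succ, List.map_cons] at hlegal happly ⊢
    refine ⟨⟨hstep, fun j hj => ?_, ?_⟩, ?_⟩
    · simp [runMove, hxlo, hbufs j (hxlo ▸ hj), List.replicate_succ]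
    · simpa [runMove, hxlo] using hlegal
    · rw [dupApply_cons]
      simp only [runMove, hxlo] at happly ⊢
      rw [happly]
      congr 1
      · funext j; by_cases hj : x ∈ σ j <;> simp [pop, hj]
      · congr 1; omega

end WordNBA

section Strict

/-- `a^(N+1) b^ω` -/
def spoilerWord (N : ℕ) (a b : α) (t : ℕ) : α := if t ≤ N then a else b

/-- `b a^(N+1) b^ω` -/
def duplicatorWord (N : ℕ) (a b : α) (t : ℕ) : α := if 1 ≤ t ∧ t ≤ N + 1 then a else b

variable {N : ℕ} {a b : α}

lemma spoilerWord_eventually_const :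
    ∀ t, N + 2 ≤ t → spoilerWord N a b t = spoilerWord N a b (N + 2) := by
  intro t ht
  simp [spoilerWord, show ¬ t ≤ N by omega]

lemma duplicatorWord_eventually_const :
    ∀ t, N + 2 ≤ t → duplicatorWord N a b t = duplicatorWord N a b (N + 2) := by
  intro t ht
  simp [duplicatorWord, show ¬ t ≤ N + 1 by omega]

variable (N a b)

def dupResponse (r : ℕ) : List (α × Fin (N + 2 + 1)) :=
  if r = N + 1 then runSegment (N + 2) (duplicatorWord N a b) 0 (N + 2)
  else if N + 2 ≤ r then runSegment (N + 2) (duplicatorWord N a b) r 1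
  else []

def dupStrategy (l : List (α × Fin (N + 2 + 1))) : List (α × Fin (N + 2 + 1)) :=
  dupResponse N a b (l.length - 1)

variable {N a b}

lemma resp_dupStrategy (s : ℕ → α × Fin (N + 2 + 1)) (r : ℕ) :
    resp (dupStrategy N a b) s r = dupResponse N a b r := by
  simp [resp, dupStrategy, hist]

variable (σ : Fin k → Set α) {i : Fin k}

local notation "s₀" => runMove (N + 2) (spoilerWord N a b)

local notation "c₀" => (⟨0, fun _ => [], 0⟩ : Conf α (Fin (N + 2 + 1)) (Fin (N + 2 + 1)) k)

lemma playConf_dupStrategy_of_le (ha : ∀ j, a ∈ σ j ↔ j = i) {n : ℕ} (hn : n ≤ N + 1) :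
    (playConf σ (dupStrategy N a b) c₀ s₀ n).bufs =
        Function.update (fun _ => []) i (List.replicate n a) ∧
      (playConf σ (dupStrategy N a b) c₀ s₀ n).q = 0 :=
  playConf_of_skip σ ha _ c₀ rfl s₀ (fun m hm => if_pos (by omega))
    fun m hm => by rw [resp_dupStrategy, dupResponse, if_neg (by omega), if_neg (by omega)]

lemma dupLegal_dupResponse_and_playConf_add_two (ha : ∀ j, a ∈ σ j ↔ j = i) (hb : b ∉ σ i) :
    DupLegal σ (wordNBA (N + 2) (duplicatorWord N a b)).δ
        (spApply σ (playConf σ (dupStrategy N a b) c₀ s₀ (N + 1)) (s₀ (N + 1)))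
        (dupResponse N a b (N + 1)) ∧
      (playConf σ (dupStrategy N a b) c₀ s₀ (N + 2)).bufs = (fun _ => []) ∧
      (playConf σ (dupStrategy N a b) c₀ s₀ (N + 2)).q = Fin.clamp (N + 2) (N + 2) := by
  have hwB := duplicatorWord_eventually_const (N := N) (a := a) (b := b)
  obtain ⟨hbufs, hq⟩ := playConf_dupStrategy_of_le σ (b := b) ha (n := N + 1) le_rfl
  set c := spApply σ (playConf σ (dupStrategy N a b) c₀ s₀ (N + 1)) (s₀ (N + 1))
  have hc : c.bufs = push σ (Function.update (fun _ => []) i (List.replicate (N + 1) a)) b := by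
    simp [c, spApply, hbufs, runMove, spoilerWord]
  obtain ⟨hlegal₁, happly₁⟩ := dupLegal_runSegment σ hwB (x := b) (lo := 0) (len := 1)
    (fun t _ ht => by simp [duplicatorWord]; omega) c
    (fun j hj => by simp [hc, push, hj, show j ≠ i from fun h => hb (h ▸ hj)])
    (by ext; simp [c, spApply, hq])
  obtain ⟨hlegal₂, happly₂⟩ := dupLegal_runSegment σ hwB (x := a) (lo := 0 + 1) (len := N + 1)
    (fun t h₁ h₂ => by simp [duplicatorWord]; omega)
    (dupApply σ c (runSegment (N + 2) (duplicatorWord N a b) 0 1))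
    (fun j hj => by simp [happly₁, hc, push, (ha j).1 hj, hb]) (by rw [happly₁])
  have hsplit : dupResponse N a b (N + 1) =
      runSegment (N + 2) (duplicatorWord N a b) 0 1 ++
        runSegment (N + 2) (duplicatorWord N a b) (0 + 1) (N + 1) := by
    rw [dupResponse, if_pos rfl, ← runSegment_append, show 1 + (N + 1) = N + 2 by omega]
  rw [playConf_succ, resp_dupStrategy, hsplit, dupApply_append, happly₂]
  refine ⟨(dupLegal_append σ _ _ _ c).2 ⟨hlegal₁, hlegal₂⟩, ?_, by dsimp only; congr 1; omega⟩
  funext j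
  by_cases hj : j = i
  · simp [hj, ha]
  · simp [happly₁, hc, push, Function.update_of_ne hj, (ha j).not.2 hj]

lemma dupLegal_dupResponse_and_playConf_succ {n : ℕ} (hn : N + 2 ≤ n)
    (hbufs : (playConf σ (dupStrategy N a b) c₀ s₀ n).bufs = fun _ => [])
    (hq : (playConf σ (dupStrategy N a b) c₀ s₀ n).q = Fin.clamp n (N + 2)) :
    DupLegal σ (wordNBA (N + 2) (duplicatorWord N a b)).δ
        (spApply σ (playConf σ (dupStrategy N a b) c₀ s₀ n) (s₀ n)) (dupResponse N a b n) ∧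
      (playConf σ (dupStrategy N a b) c₀ s₀ (n + 1)).bufs = (fun _ => []) ∧
      (playConf σ (dupStrategy N a b) c₀ s₀ (n + 1)).q = Fin.clamp (n + 1) (N + 2) := by
  set c := spApply σ (playConf σ (dupStrategy N a b) c₀ s₀ n) (s₀ n)
  have hc : c.bufs = push σ (fun _ => []) b := by
    simp [c, spApply, hbufs, runMove, spoilerWord, show ¬ n ≤ N by omega]
  obtain ⟨hlegal, happly⟩ := dupLegal_runSegment σ
    (duplicatorWord_eventually_const (N := N) (a := a) (b := b)) (x := b)
    (lo := n) (len := 1) (fun t h₁ h₂ => by simp [duplicatorWord, show ¬ t ≤ N + 1 by omega]) c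
    (fun j hj => by simp [hc, push, hj]) hq
  rw [playConf_succ, resp_dupStrategy, dupResponse, if_neg (by omega), if_pos hn, happly]
  refine ⟨hlegal, ?_, rfl⟩
  funext j
  by_cases hj : b ∈ σ j <;> simp [hc, push, hj]

lemma playConf_dupStrategy_of_ge (ha : ∀ j, a ∈ σ j ↔ j = i) (hb : b ∉ σ i) {n : ℕ}
    (hn : N + 2 ≤ n) :
    (playConf σ (dupStrategy N a b) c₀ s₀ n).bufs = (fun _ => []) ∧
      (playConf σ (dupStrategy N a b) c₀ s₀ n).q = Fin.clamp n (N + 2) := by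
  induction n, hn using Nat.le_induction with
  | base => exact (dupLegal_dupResponse_and_playConf_add_two σ ha hb).2
  | succ n hn ih => exact (dupLegal_dupResponse_and_playConf_succ σ hn ih.1 ih.2).2

lemma dupOkAt_dupStrategy (κ : Fin k → ℕ∞) (ha : ∀ j, a ∈ σ j ↔ j = i) (hb : b ∉ σ i)
    (hκ : (N : ℕ∞) + 1 ≤ κ i) (n : ℕ) :
    DupOkAt σ κ (wordNBA (N + 2) (duplicatorWord N a b)).δ (dupStrategy N a b) c₀ s₀ n := by
  rw [DupOkAt, resp_dupStrategy]
  rcases lt_trichotomy n (N + 1) with hn | rfl | hn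
  · rw [dupResponse, if_neg (by omega), if_neg (by omega)]
    refine ⟨trivial, fun j => ?_⟩
    rw [(playConf_dupStrategy_of_le σ (N := N) (b := b) ha (n := n + 1) (by omega)).1]
    by_cases hj : j = i
    · subst hj
      simp only [Function.update_self, List.length_replicate]
      exact le_trans (by exact_mod_cast (by omega : n + 1 ≤ N + 1)) hκ
    · simp [hj]
  · obtain ⟨hlegal, hbufs, -⟩ := dupLegal_dupResponse_and_playConf_add_two σ ha hb
    have hbufs' : (playConf σ (dupStrategy N a b) c₀ s₀ (N + 1 + 1)).bufs = fun _ => [] := hbufs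
    exact ⟨hlegal, fun j => by simp [hbufs']⟩
  · obtain ⟨hbufs, hq⟩ := playConf_dupStrategy_of_ge σ (N := N) ha hb (n := n) (by omega)
    obtain ⟨hlegal, hbufs', -⟩ := dupLegal_dupResponse_and_playConf_succ σ (by omega) hbufs hq
    exact ⟨hlegal, fun j => by simp [hbufs']⟩

lemma dupAccept_dupStrategy (s : ℕ → α × Fin (N + 2 + 1)) :
    DupAccept (wordNBA (N + 2) (duplicatorWord N a b)).F (dupStrategy N a b) s := by
  refine (Set.Ici_infinite (N + 2)).mono fun r (hr : N + 2 ≤ r) =>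
    ⟨runMove (N + 2) (duplicatorWord N a b) r, ?_, Fin.clamp_eq_last _ _ (by omega)⟩
  rw [resp_dupStrategy, dupResponse, if_neg (by omega), if_pos hr]
  simp [runSegment]

lemma spOcc_eq_dupOcc_dupStrategy (x : α) : spOcc s₀ x = dupOcc (dupStrategy N a b) s₀ x := by
  refine spOcc_eq_dupOcc_of_reindex _ _ (fun n => if n ≤ N then (N + 1, n + 1) else (n, 0))
    ?_ ?_ ?_ x
  · intro n m h
    dsimp only at h
    split_ifs at h <;> simp only [Prod.mk.injEq] at h <;> omega
  · intro n
    by_cases hn : n ≤ N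
    · simp [hn, resp_dupStrategy, dupResponse, getElem?_runSegment, runMove, duplicatorWord,
        spoilerWord]
    · rcases Nat.lt_or_ge n (N + 2) with hn₂ | hn₂
      · obtain rfl : n = N + 1 := by omega
        simp [resp_dupStrategy, dupResponse, getElem?_runSegment, runMove, duplicatorWord,
          spoilerWord]
      · simp [hn, resp_dupStrategy, dupResponse, getElem?_runSegment, runMove, duplicatorWord,
          spoilerWord, show n ≠ N + 1 by omega, hn₂, show ¬ n ≤ N + 1 by omega]
  · intro r t m hm
    rw [resp_dupStrategy, dupResponse] at hm
    have ht : ∀ len lo, (runSegment (N + 2) (duplicatorWord N a b) lo len)[t]? = some m →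
        t < len := fun len lo h => by
      by_contra ht
      simp [getElem?_runSegment, ht] at h
    split_ifs at hm with h₁ h₂
    · subst h₁
      cases t with
      | zero => exact ⟨N + 1, by simp⟩
      | succ t => exact ⟨t, by simp [show t ≤ N by have := ht _ _ hm; omega]⟩
    · exact ⟨r, by simp [show ¬ r ≤ N by omega, show t = 0 by have := ht _ _ hm; omega]⟩
    · simp at hm

theorem simu_of_capacity_ge (κ : Fin k → ℕ∞) (ha : ∀ j, a ∈ σ j ↔ j = i) (hb : b ∉ σ i)
    (hκ : (N : ℕ∞) + 1 ≤ κ i) :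
    Simu σ κ (wordNBA (N + 2) (spoilerWord N a b)) (wordNBA (N + 2) (duplicatorWord N a b)) :=
  dupWinsFrom_of_forced σ κ _ _ _ _ c₀ (dupStrategy N a b) s₀
    (fun s n => eq_runMove_of_spLegalAt σ spoilerWord_eventually_const _ c₀ rfl s n)
    (dupOkAt_dupStrategy σ κ ha hb hκ)
    fun _ => ⟨dupAccept_dupStrategy s₀, spOcc_eq_dupOcc_dupStrategy⟩

theorem not_simu_of_capacity_le (κ : Fin k → ℕ∞) (ha : ∀ j, a ∈ σ j ↔ j = i) {j₀ : Fin k}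
    (hb : b ∈ σ j₀) (hj₀ : j₀ ≠ i) (hκ : κ i ≤ N) :
    ¬ Simu σ κ (wordNBA (N + 2) (spoilerWord N a b)) (wordNBA (N + 2) (duplicatorWord N a b)) := by
  rintro ⟨θ, hθ⟩
  have hok : ∀ n, DupOkAt σ κ (wordNBA (N + 2) (duplicatorWord N a b)).δ θ c₀ s₀ n := fun n =>
    (hθ s₀).1 n fun m _ => spLegalAt_runMove σ spoilerWord_eventually_const θ c₀ rfl m
  have hconf : ∀ n ≤ N + 1, (playConf σ θ c₀ s₀ n).bufs =
      Function.update (fun _ => []) i (List.replicate n a) ∧ (playConf σ θ c₀ s₀ n).q = 0 := by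
    intro n hn
    induction n using Nat.strong_induction_on with
    | _ n ih =>
      refine playConf_of_skip σ ha θ c₀ rfl s₀ (fun m hm => if_pos (by omega)) fun m hm => ?_
      obtain ⟨hbufs, hq⟩ := ih m hm (by omega)
      refine eq_nil_of_dupLegal σ (j := j₀) ?_ (fun x q' hq' => ?_) (hok m).1
      · simp [spApply, push, hbufs, Function.update_of_ne hj₀, (ha j₀).not.2 hj₀, runMove,
          spoilerWord, show m ≤ N by omega]
      · obtain ⟨rfl, -⟩ := hq'
        simpa [spApply, hq, duplicatorWord] using hb
  have hcap := (hok N).2 i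
  rw [(hconf (N + 1) le_rfl).1] at hcap
  simp only [Function.update_self, List.length_replicate] at hcap
  exact absurd (hcap.trans hκ) (by norm_cast; omega)

end Strict

theorem exists_simu_strict_general {α : Type} {k : ℕ}
    (σ : Fin k → Set α) (hcov : ∀ x : α, ∃ i, x ∈ σ i)
    (κ κ' : Fin k → ℕ∞) (i : Fin k) (a b : α)
    (ha : {j | a ∈ σ j} = {i})
    (hab : {j | a ∈ σ j} ∩ {j | b ∈ σ j} = ∅)
    (hlt : κ i < κ' i) :
    ∃ A B : NBA α, ¬ Simu σ κ A B ∧ Simu σ κ' A B := by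
  have ha' : ∀ j, a ∈ σ j ↔ j = i := fun j => Set.ext_iff.mp ha j
  have hbi : b ∉ σ i := fun hb => (Set.eq_empty_iff_forall_notMem.mp hab) i ⟨(ha' i).2 rfl, hb⟩
  obtain ⟨j₀, hj₀⟩ := hcov b
  obtain ⟨N, hN⟩ := ENat.ne_top_iff_exists.mp hlt.ne_top
  exact ⟨_, _, not_simu_of_capacity_le σ κ ha' hj₀ (fun h => hbi (h ▸ hj₀)) hN.ge,
    simu_of_capacity_ge σ κ' ha' hbi (hN ▸ Order.add_one_le_of_lt hlt)⟩

/-- **Theorem (strictness of the capacity hierarchy).**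
Let `σ = (Σ_i)_{i∈[k]}` be a trace alphabet and `κ, κ'` capacity functions for `k`
buffers. Suppose there are `i ∈ [k]` and letters `a, b` such that `σ(a) = {i}`,
`σ(a) ∩ σ(b) = ∅`, `κ i` is finite and `κ i < κ' i`. Then there are NBA `A` and `B`
over `α` such that `A ⋢^κ_σ B` but `A ⊑^{κ'}_σ B`. -/
theorem exists_simu_strict {α : Type} [Fintype α] {k : ℕ}
    (σ : Fin k → Set α) (hcov : ∀ x : α, ∃ i, x ∈ σ i)
    (κ κ' : Fin k → ℕ∞) (i : Fin k) (a b : α)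
    (ha : {j | a ∈ σ j} = {i})
    (hab : {j | a ∈ σ j} ∩ {j | b ∈ σ j} = ∅)
    (hfin : κ i ≠ ⊤) (hlt : κ i < κ' i) :
    ∃ A B : NBA α, ¬ Simu σ κ A B ∧ Simu σ κ' A B :=
  exists_simu_strict_general σ hcov κ κ' i a b ha hab hlt

end MultiBuffer
end
end

section
/- Let σ=(Σ_i)_{i∈[k]} be a trace alphabet, κ_ω the capacity function with κ_ω(i) = ω for all i ∈ [k], and A, B nondeterministic Büchi automata over Σ. If A ⊑^{κ_ω}_σ B, then there exists a continuous, trace-preserving function f : ARun(A) → ARun(B). -/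
open Classical

noncomputable section

namespace MultiBuffer

variable {α P Q : Type} {k : ℕ}

/-! ### Accepting runs, the metric on runs, continuity and trace preservation -/

variable {α : Type}

/-- The set of accepting runs of an NBA, as a type: a run `q₀ a₀ q₁ a₁ ⋯` is given
by its state sequence and its word, and it must start in the initial state, follow
the transition function, and visit `F` infinitely often. -/
def ARun (A : NBA α) : Type :=
  {x : (ℕ → A.Q) × (ℕ → α) //
    x.1 0 = A.init ∧ (∀ n, x.1 (n + 1) ∈ A.δ (x.1 n) (x.2 n)) ∧ {n | x.1 n ∈ A.F}.Infinite}

/-- An accepting run viewed as the infinite sequence `q₀ a₀ q₁ a₁ ⋯ ∈ (Q ∪ Σ)^ω`. -/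
def seqOf {A : NBA α} (ρ : ARun A) : ℕ → A.Q ⊕ α :=
  fun n => if n % 2 = 0 then Sum.inl (ρ.val.1 (n / 2)) else Sum.inr (ρ.val.2 (n / 2))

/-- Continuity of `f : ARun A → ARun B` with respect to the metric
`d(x,y) = inf {2^{-i} ∣ x_j = y_j for all j < i}` on the sequences in `(Q ∪ Σ)^ω`:
for every run `ρ` and every required output precision `2^{-n}` there is an input
precision `2^{-m}` such that runs `2^{-m}`-close to `ρ` are mapped to runs
`2^{-n}`-close to `f ρ`. -/
def ContinuousRF {A B : NBA α} (f : ARun A → ARun B) : Prop :=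
  ∀ (ρ : ARun A) (n : ℕ), ∃ m : ℕ, ∀ ρ' : ARun A,
    (∀ j < m, seqOf ρ' j = seqOf ρ j) → ∀ j < n, seqOf (f ρ') j = seqOf (f ρ) j

/-- `f : ARun A → ARun B` is trace-preserving: the word of `f ρ` is trace
equivalent to the word of `ρ`. -/
def TracePres {k : ℕ} (σ : Fin k → Set α) {A B : NBA α} (f : ARun A → ARun B) : Prop :=
  ∀ ρ : ARun A, TraceEquiv σ (ofInf ρ.val.2) (ofInf (f ρ).val.2)

/-- The capacity function making all `k` buffers unbounded. -/
def kapAllOmega (k : ℕ) : Fin k → ℕ∞ := fun _ => ⊤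

/-!
Spoiler plays an accepting run `ρ` of `A` transition by transition, and Duplicator answers with
her winning strategy; since her run is accepting, she answers infinitely often, and the
concatenation of her answers is an accepting run `f ρ` of `B`. Her first answers depend only on
the first moves of Spoiler, so `f` is continuous. On every buffer `i`, Spoiler's word projected to
`Σ_i` is Duplicator's projected word followed by the content of the buffer, so her projection is
always a prefix of his; as every letter occurs equally often in both words, she also eventually
catches up with each of his prefixes, and the two projections coincide.
-/

section Words

@[simp] lemma hist_zero (u : ℕ → α) : hist u 0 = [] := rfl

lemma hist_succ (u : ℕ → α) (n : ℕ) : hist u (n + 1) = hist u n ++ [u n] := by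
  simp only [hist, List.ofFn_succ', List.concat_eq_append]
  rfl

@[simp] lemma length_hist (u : ℕ → α) (n : ℕ) : (hist u n).length = n := List.length_ofFn

lemma hist_prefix (u : ℕ → α) {n m : ℕ} (h : n ≤ m) : hist u n <+: hist u m := by
  induction m, h using Nat.le_induction with
  | base => exact List.prefix_refl _
  | succ m _ ih => exact ih.trans (hist_succ u m ▸ List.prefix_append _ _)

lemma hist_comp {γ : Type} (f : α → γ) (u : ℕ → α) (n : ℕ) :
    hist (f ∘ u) n = (hist u n).map f :=
  List.map_ofFn.symm

lemma hist_congr {u v : ℕ → α} {n : ℕ} (h : ∀ m < n, u m = v m) : hist u n = hist v n :=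
  List.ofFn_inj.2 (funext fun i => h i i.2)

lemma count_hist (u : ℕ → α) (a : α) (n : ℕ) :
    (hist u n).count a = Nat.count (fun j => u j = a) n := by
  induction n with
  | zero => rfl
  | succ n ih => simp [hist_succ, List.count_singleton, Nat.count_succ, ih]

lemma encard_setOf_lt_and (p : ℕ → Prop) (n : ℕ) :
    {j | j < n ∧ p j}.encard = Nat.count p n := by
  rw [Nat.count_eq_card_filter_range, ← Set.encard_coe_eq_coe_finsetCard]
  congr 1
  ext j
  simp

lemma count_le_encard (p : ℕ → Prop) (n : ℕ) : (Nat.count p n : ℕ∞) ≤ {j | p j}.encard := by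
  rw [← encard_setOf_lt_and]
  exact Set.encard_le_encard fun j hj => hj.2

lemma exists_le_count_of_le_encard {p : ℕ → Prop} {c : ℕ} (h : (c : ℕ∞) ≤ {j | p j}.encard) :
    ∃ m, c ≤ Nat.count p m := by
  obtain ⟨t, hts, htc⟩ := Set.exists_subset_encard_eq h
  obtain ⟨b, hb⟩ := (Set.finite_of_encard_eq_coe htc).bddAbove
  refine ⟨b + 1, ?_⟩
  have hsub : t ⊆ {j | j < b + 1 ∧ p j} := fun j hj => ⟨Nat.lt_succ_of_le (hb hj), hts hj⟩
  have := Set.encard_le_encard hsub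
  rwa [htc, encard_setOf_lt_and, Nat.cast_le] at this

lemma exists_hist_le_hist {u v : ℕ → α}
    (h : ∀ a, {j | u j = a}.encard ≤ {j | v j = a}.encard) (n : ℕ) :
    ∃ m, (hist u n : Multiset α) ≤ hist v m := by
  have hcount : ∀ a, ∃ m, (hist u n).count a ≤ (hist v m).count a := fun a => by
    simp only [count_hist]
    exact exists_le_count_of_le_encard ((count_le_encard _ n).trans (h a))
  choose m hm using hcount
  refine ⟨(hist u n).toFinset.sup m, Multiset.le_iff_count.2 fun a => ?_⟩
  simp only [Multiset.coe_count]
  by_cases ha : a ∈ hist u n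
  · refine (hm a).trans ?_
    simp only [count_hist]
    exact Nat.count_monotone _ (Finset.le_sup (List.mem_toFinset.2 ha))
  · simp [List.count_eq_zero_of_not_mem ha]

lemma countBelow_eq_count (p : ℕ → Prop) (j : ℕ) : countBelow p j = Nat.count p j := by
  rw [countBelow, Set.ncard_def, encard_setOf_lt_and, ENat.toNat_natCast]

lemma count_inS_ofInf (S : Set α) (u : ℕ → α) (j : ℕ) :
    Nat.count (InS S (ofInf u)) j = ((hist u j).filter (· ∈ S)).length := by
  induction j with
  | zero => rfl
  | succ j ih =>
    by_cases hj : u j ∈ S <;> simp [Nat.count_succ, hist_succ, ih, hj, InS, ofInf]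

lemma proj_ofInf_count {S : Set α} {u : ℕ → α} {j : ℕ} (hj : u j ∈ S) :
    proj S (ofInf u) (Nat.count (InS S (ofInf u)) j) = some (u j) := by
  have hjS : InS S (ofInf u) j := ⟨u j, hj, rfl⟩
  have hex : ∃ j', InS S (ofInf u) j' ∧
      countBelow (InS S (ofInf u)) j' = Nat.count (InS S (ofInf u)) j :=
    ⟨j, hjS, countBelow_eq_count _ _⟩
  rw [proj, dif_pos hex]
  obtain ⟨hS, hcount⟩ := hex.choose_spec
  rw [countBelow_eq_count] at hcount
  rw [Nat.count_injective hS hjS hcount]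
  rfl

lemma proj_ofInf_of_lt_length {S : Set α} {u : ℕ → α} {N m : ℕ}
    (h : m < ((hist u N).filter (· ∈ S)).length) :
    proj S (ofInf u) m = ((hist u N).filter (· ∈ S))[m]? := by
  induction N with
  | zero => simp at h
  | succ N ih =>
    rw [hist_succ, List.filter_append] at h ⊢
    by_cases hm : m < ((hist u N).filter (· ∈ S)).length
    · rw [List.getElem?_append_left hm]
      exact ih hm
    · have huN : u N ∈ S := by
        by_contra huN
        simp [huN] at h
        omega
      have hmN : m = ((hist u N).filter (· ∈ S)).length := by
        simp [huN] at h
        omega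
      rw [List.getElem?_append_right (by omega), hmN, ← count_inS_ofInf, proj_ofInf_count huN]
      simp [huN]

lemma proj_ofInf_eq_none {S : Set α} {u : ℕ → α} {m : ℕ}
    (h : ∀ N, ((hist u N).filter (· ∈ S)).length ≤ m) : proj S (ofInf u) m = none := by
  rw [proj, dif_neg]
  rintro ⟨j, ⟨a, ha, hja⟩, hjm⟩
  have hj : u j ∈ S := Option.some_injective _ hja ▸ ha
  have := h (j + 1)
  rw [countBelow_eq_count, count_inS_ofInf] at hjm
  simp [hist_succ, hj] at this
  omega

lemma proj_ofInf_eq_of_prefix {S : Set α} {u v : ℕ → α}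
    (huv : ∀ n, ∃ N, (hist u n).filter (· ∈ S) <+: (hist v N).filter (· ∈ S))
    (hvu : ∀ n, ∃ N, (hist v n).filter (· ∈ S) <+: (hist u N).filter (· ∈ S)) :
    proj S (ofInf u) = proj S (ofInf v) := by
  funext m
  by_cases hu : ∃ N, m < ((hist u N).filter (· ∈ S)).length
  · obtain ⟨N, hN⟩ := hu
    obtain ⟨N', hN'⟩ := huv N
    rw [proj_ofInf_of_lt_length hN, proj_ofInf_of_lt_length (hN.trans_le hN'.length_le),
      List.getElem?_eq_getElem hN, hN'.getElem hN, List.getElem?_eq_getElem]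
  · have hv : ¬ ∃ N, m < ((hist v N).filter (· ∈ S)).length := fun ⟨N, hN⟩ =>
      let ⟨N', hN'⟩ := hvu N
      hu ⟨N', hN.trans_le hN'.length_le⟩
    push Not at hu hv
    rw [proj_ofInf_eq_none hu, proj_ofInf_eq_none hv]

theorem proj_ofInf_eq_of_prefix_of_le {S : Set α} {u v : ℕ → α}
    (hvu : ∀ n, ∃ N, (hist v n).filter (· ∈ S) <+: (hist u N).filter (· ∈ S))
    (hle : ∀ n, ∃ N, (hist u n : Multiset α) ≤ hist v N) :
    proj S (ofInf u) = proj S (ofInf v) := by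
  refine proj_ofInf_eq_of_prefix (fun n => ?_) hvu
  obtain ⟨N, hN⟩ := hle n
  obtain ⟨N', hN'⟩ := hvu N
  refine ⟨N, List.prefix_of_prefix_length_le
    ((hist_prefix u (le_max_left n N')).filter _) (hN'.trans ((hist_prefix u
      (le_max_right n N')).filter _)) ?_⟩
  exact ((Multiset.coe_le.1 hN).filter _).length_le

end Words

section Concatenation

variable {β : Type} (R : ℕ → List β)

def joinPrefix : ℕ → List β
  | 0 => []
  | n + 1 => joinPrefix n ++ R n

lemma joinPrefix_prefix {n m : ℕ} (h : n ≤ m) : joinPrefix R n <+: joinPrefix R m := by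
  induction m, h using Nat.le_induction with
  | base => exact List.prefix_refl _
  | succ m _ ih => exact ih.trans (List.prefix_append _ _)

lemma joinPrefix_congr {R' : ℕ → List β} {n : ℕ} (h : ∀ m < n, R m = R' m) :
    joinPrefix R n = joinPrefix R' n := by
  induction n with
  | zero => rfl
  | succ n ih => rw [joinPrefix, joinPrefix, ih fun m hm => h m (by omega), h n n.lt_succ_self]

lemma exists_lt_length_joinPrefix (hR : {n | R n ≠ []}.Infinite) (j : ℕ) :
    ∃ n, j < (joinPrefix R n).length := by
  induction j with
  | zero =>
    obtain ⟨n, hn⟩ := hR.nonempty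
    exact ⟨n + 1, by simpa [joinPrefix, List.length_pos_iff] using .inr hn⟩
  | succ j ih =>
    obtain ⟨m, hm⟩ := ih
    obtain ⟨n, hn, hmn⟩ := hR.exists_gt m
    have hle := (joinPrefix_prefix R hmn.le).length_le
    have hpos := List.length_pos_iff.2 hn
    exact ⟨n + 1, by simp only [joinPrefix, List.length_append]; omega⟩

lemma length_joinPrefix_add_lt {n m l : ℕ} (hnm : n < m) (hl : l < (R n).length) :
    (joinPrefix R n).length + l < (joinPrefix R m).length := by
  have := (joinPrefix_prefix R (Nat.succ_le_of_lt hnm)).length_le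
  simp only [joinPrefix, List.length_append] at this
  omega

variable {R} (hR : ∀ j, ∃ n, j < (joinPrefix R n).length)

/-- The infinite word `R 0 ++ R 1 ++ ⋯`. -/
def join (j : ℕ) : β := (joinPrefix R (Nat.find (hR j)))[j]'(Nat.find_spec (hR j))

lemma join_eq_getElem {j n : ℕ} (h : j < (joinPrefix R n).length) :
    join hR j = (joinPrefix R n)[j] := by
  rcases le_total (Nat.find (hR j)) n with hn | hn
  · exact (joinPrefix_prefix R hn).getElem _
  · exact ((joinPrefix_prefix R hn).getElem h).symm

lemma join_congr {R' : ℕ → List β} (hR' : ∀ j, ∃ n, j < (joinPrefix R' n).length) {n : ℕ}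
    (h : joinPrefix R' n = joinPrefix R n) {j : ℕ} (hj : j < (joinPrefix R n).length) :
    join hR' j = join hR j := by
  rw [join_eq_getElem hR hj, join_eq_getElem hR' (h ▸ hj)]
  simp only [h]

lemma join_length_add {n l : ℕ} (hl : l < (R n).length) :
    join hR ((joinPrefix R n).length + l) = (R n)[l] := by
  rw [join_eq_getElem hR (n := n + 1) (by simp [joinPrefix, hl])]
  simp [joinPrefix, List.getElem_append_right]

lemma hist_join (n : ℕ) : hist (join hR) (joinPrefix R n).length = joinPrefix R n :=
  List.ext_getElem (by simp) fun j hj _ => by simp [hist, join_eq_getElem hR (n := n)]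

lemma infinite_setOf_join {p : β → Prop} (hp : {n | ∃ b ∈ R n, p b}.Infinite) :
    {j | p (join hR j)}.Infinite := by
  refine Set.infinite_of_forall_exists_gt fun a => ?_
  obtain ⟨m, hm⟩ := hR a
  obtain ⟨n, ⟨b, hb, hpb⟩, hmn⟩ := hp.exists_gt m
  obtain ⟨l, hl, rfl⟩ := List.mem_iff_getElem.1 hb
  have hle := (joinPrefix_prefix R hmn.le).length_le
  exact ⟨(joinPrefix R n).length + l, by simpa [join_length_add hR hl] using hpb, by omega⟩

lemma encard_le_encard_setOf_join (p : β → Prop) :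
    {x : ℕ × ℕ | ∃ b, (R x.1)[x.2]? = some b ∧ p b}.encard ≤ {j | p (join hR j)}.encard := by
  have hlt : ∀ {x : ℕ × ℕ}, (∃ b, (R x.1)[x.2]? = some b ∧ p b) → x.2 < (R x.1).length :=
    fun ⟨_, hb, _⟩ => (List.getElem?_eq_some_iff.1 hb).1
  refine Set.encard_le_encard_of_injOn (f := fun x => (joinPrefix R x.1).length + x.2)
    (fun x hx => ?_) (fun x hx y hy hxy => ?_)
  · obtain ⟨b, hb, hpb⟩ := hx
    obtain ⟨hl, rfl⟩ := List.getElem?_eq_some_iff.1 hb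
    simpa [join_length_add hR hl] using hpb
  · have hx2 := hlt hx
    have hy2 := hlt hy
    simp only at hxy
    have hround : x.1 = y.1 := by
      rcases lt_trichotomy x.1 y.1 with h | h | h
      · have := length_joinPrefix_add_lt R h hx2
        omega
      · exact h
      · have := length_joinPrefix_add_lt R h hy2
        omega
    rw [hround, Nat.add_left_cancel_iff] at hxy
    exact Prod.ext hround hxy

end Concatenation

section Paths

variable (δ : Q → α → Set Q)

/-- A list `(a₁, q₁) ⋯ (aₙ, qₙ)` read from `q` as the path `q -a₁→ q₁ ⋯ -aₙ→ qₙ`. -/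
def IsPath : Q → List (α × Q) → Prop
  | _, [] => True
  | q, x :: d => x.2 ∈ δ q x.1 ∧ IsPath x.2 d

def lastState (q : Q) (d : List (α × Q)) : Q := ((d.getLast?).map Prod.snd).getD q

@[simp] lemma lastState_nil (q : Q) : lastState q ([] : List (α × Q)) = q := rfl

@[simp] lemma lastState_append_singleton (q : Q) (d : List (α × Q)) (x : α × Q) :
    lastState q (d ++ [x]) = x.2 := by
  simp [lastState]

lemma lastState_append (q : Q) (d₁ d₂ : List (α × Q)) :
    lastState q (d₁ ++ d₂) = lastState (lastState q d₁) d₂ := by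
  induction d₂ using List.reverseRecOn with
  | nil => simp
  | append_singleton d₂ x _ => rw [← List.append_assoc, lastState_append_singleton,
      lastState_append_singleton]

lemma lastState_cons (q : Q) (x : α × Q) (d : List (α × Q)) :
    lastState q (x :: d) = lastState x.2 d := by
  rw [← List.singleton_append, lastState_append]
  rfl

variable {δ}

lemma isPath_append {q : Q} {d₁ d₂ : List (α × Q)} :
    IsPath δ q (d₁ ++ d₂) ↔ IsPath δ q d₁ ∧ IsPath δ (lastState q d₁) d₂ := by
  induction d₁ generalizing q with
  | nil => simp [IsPath]
  | cons x d₁ ih => simp [IsPath, ih, lastState_cons, and_assoc]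

lemma IsPath.of_prefix {q : Q} {d₁ d₂ : List (α × Q)} (h : IsPath δ q d₂) (hd : d₁ <+: d₂) :
    IsPath δ q d₁ := by
  obtain ⟨t, rfl⟩ := hd
  exact (isPath_append.1 h).1

lemma mem_of_isPath_hist {q : Q} {x : ℕ → α × Q} {j : ℕ} (h : IsPath δ q (hist x (j + 1))) :
    lastState q (hist x (j + 1)) ∈ δ (lastState q (hist x j)) (x j).1 := by
  rw [hist_succ, isPath_append] at h
  rw [hist_succ, lastState_append_singleton]
  exact h.2.1

end Paths

/-- The accepting run of `B` whose `j`-th transition has letter `(x j).1` and target `(x j).2`. -/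
def ARun.ofPairs {B : NBA α} (x : ℕ → α × B.Q) (hpath : ∀ n, IsPath B.δ B.init (hist x n))
    (hacc : {j | (x j).2 ∈ B.F}.Infinite) : ARun B :=
  ⟨(fun j => lastState B.init (hist x j), fun j => (x j).1), rfl,
    fun j => mem_of_isPath_hist (hpath (j + 1)),
    (hacc.image (add_left_injective 1).injOn).mono <| by
      rintro _ ⟨j, hj, rfl⟩
      simpa [hist_succ] using hj⟩

lemma seqOf_congr {A : NBA α} {ρ ρ' : ARun A} {n : ℕ}
    (h₁ : ∀ i < n, ρ'.val.1 i = ρ.val.1 i) (h₂ : ∀ i < n, ρ'.val.2 i = ρ.val.2 i)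
    {j : ℕ} (hj : j < n) : seqOf ρ' j = seqOf ρ j := by
  unfold seqOf
  split_ifs
  · rw [h₁ _ (by omega)]
  · rw [h₂ _ (by omega)]

lemma seqOf_ofPairs_congr {B : NBA α} {x x' : ℕ → α × B.Q}
    {hpath : ∀ n, IsPath B.δ B.init (hist x n)}
    {hacc : {j | (x j).2 ∈ B.F}.Infinite} {hpath' : ∀ n, IsPath B.δ B.init (hist x' n)}
    {hacc' : {j | (x' j).2 ∈ B.F}.Infinite} {n : ℕ} (h : ∀ i < n, x' i = x i) {j : ℕ}
    (hj : j < n) : seqOf (ARun.ofPairs x' hpath' hacc') j = seqOf (ARun.ofPairs x hpath hacc) j :=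
  seqOf_congr (fun i hi => congrArg (lastState B.init) (hist_congr fun m hm => h m (by omega)))
    (fun i hi => congrArg Prod.fst (h i hi)) hj

lemma eq_of_seqOf_eq {A : NBA α} {ρ ρ' : ARun A} {n : ℕ}
    (h : ∀ j < 2 * n, seqOf ρ' j = seqOf ρ j) {i : ℕ} (hi : i < n) :
    ρ'.val.1 i = ρ.val.1 i ∧ ρ'.val.2 i = ρ.val.2 i := by
  have h₁ := h (2 * i) (by omega)
  have h₂ := h (2 * i + 1) (by omega)
  have hodd : (2 * i + 1) / 2 = i := by omega
  simp only [seqOf] at h₁ h₂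
  simp [hodd] at h₁ h₂
  exact ⟨h₁, h₂⟩

section Game

variable {σ : Fin k → Set α} {δB : Q → α → Set Q}

lemma spApply_bufs (c : Conf α P Q k) (m : α × P) (i : Fin k) :
    (spApply σ c m).bufs i = c.bufs i ++ [m.1].filter (· ∈ σ i) := by
  by_cases hm : m.1 ∈ σ i <;> simp [spApply, push, hm]

lemma DupLegal.isPath {c : Conf α P Q k} {d : List (α × Q)} (h : DupLegal σ δB c d) :
    IsPath δB c.q d := by
  induction d generalizing c with
  | nil => trivial
  | cons x d ih => exact ⟨h.1, ih h.2.2⟩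

lemma DupLegal.bufs_eq {c : Conf α P Q k} {d : List (α × Q)} (h : DupLegal σ δB c d)
    (i : Fin k) : c.bufs i = (d.map Prod.fst).filter (· ∈ σ i) ++ (dupApply σ c d).bufs i := by
  induction d generalizing c with
  | nil => rfl
  | cons x d ih =>
    obtain ⟨-, hhead, hrest⟩ := h
    have hpop := ih hrest
    change c.bufs i = _ ++ (dupApply σ ⟨c.p, pop σ c.bufs x.1, x.2⟩ d).bufs i
    by_cases hx : x.1 ∈ σ i
    · obtain ⟨t, ht⟩ := List.head?_eq_some_iff.1 (hhead i hx)
      simpa [pop, hx, ht] using hpop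
    · simpa [pop, hx] using hpop

variable {θ : List (α × P) → List (α × Q)} {c0 : Conf α P Q k} {s : ℕ → α × P}

lemma lastState_joinPrefix_resp (n : ℕ) :
    lastState c0.q (joinPrefix (resp θ s) n) = (playConf σ θ c0 s n).q := by
  induction n with
  | zero => rfl
  | succ n ih =>
    rw [joinPrefix, lastState_append, ih]
    rfl

lemma isPath_joinPrefix_resp
    (hleg : ∀ n, DupLegal σ δB (spApply σ (playConf σ θ c0 s n) (s n)) (resp θ s n)) (n : ℕ) :
    IsPath δB c0.q (joinPrefix (resp θ s) n) := by
  induction n with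
  | zero => trivial
  | succ n ih =>
    rw [joinPrefix, isPath_append, lastState_joinPrefix_resp]
    exact ⟨ih, (hleg n).isPath⟩

/-- The buffer invariant: what Spoiler has written on buffer `i` is what Duplicator has read from
it, followed by the current content of the buffer. -/
lemma bufs_append_filter_hist
    (hleg : ∀ n, DupLegal σ δB (spApply σ (playConf σ θ c0 s n) (s n)) (resp θ s n))
    (i : Fin k) (n : ℕ) :
    c0.bufs i ++ (hist (fun m => (s m).1) n).filter (· ∈ σ i)
      = ((joinPrefix (resp θ s) n).map Prod.fst).filter (· ∈ σ i)
        ++ (playConf σ θ c0 s n).bufs i := by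
  induction n with
  | zero => simp [joinPrefix, playConf]
  | succ n ih =>
    rw [hist_succ, List.filter_append, ← List.append_assoc, ih, List.append_assoc,
      ← spApply_bufs, (hleg n).bufs_eq i, joinPrefix, List.map_append, List.filter_append,
      List.append_assoc]
    rfl

end Game

section SimulationMap

variable {σ : Fin k → Set α} {κ : Fin k → ℕ∞} {A B : NBA α}

def spoilerMoves (ρ : ARun A) : ℕ → α × A.Q := fun n => (ρ.val.2 n, ρ.val.1 (n + 1))

lemma spLegalAt_spoilerMoves {θ : List (α × A.Q) → List (α × Q)}
    {c0 : Conf α A.Q Q k} (hc0 : c0.p = A.init) (ρ : ARun A) (n : ℕ) :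
    SpLegalAt σ A.δ θ c0 (spoilerMoves ρ) n := by
  have hp : (playConf σ θ c0 (spoilerMoves ρ) n).p = ρ.val.1 n := by
    cases n with
    | zero => exact hc0.trans ρ.2.1.symm
    | succ n => rfl
  unfold SpLegalAt SpLegal
  rw [hp]
  exact ρ.2.2.1 n

lemma spAccept_spoilerMoves (ρ : ARun A) : SpAccept A.F (spoilerMoves ρ) := by
  have hsub :
      {n | ρ.val.1 n ∈ A.F} ⊆ insert 0 ((· + 1) '' {n | ρ.val.1 (n + 1) ∈ A.F}) := by
    rintro (_ | n) hn
    · exact Set.mem_insert 0 _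
    · exact Set.mem_insert_of_mem 0 ⟨n, hn, rfl⟩
  exact fun hfin => ρ.2.2.2 (((hfin.image _).insert 0).subset hsub)

variable (h : Simu σ κ A B)

lemma Simu.dupLegal_resp (ρ : ARun A) (n : ℕ) :
    DupLegal σ B.δ
      (spApply σ (playConf σ h.choose ⟨A.init, fun _ => [], B.init⟩ (spoilerMoves ρ) n)
        (spoilerMoves ρ n))
      (resp h.choose (spoilerMoves ρ) n) :=
  ((h.choose_spec (spoilerMoves ρ)).1 n fun m _ => spLegalAt_spoilerMoves rfl ρ m).1

lemma Simu.dupAccept_and_occ (ρ : ARun A) :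
    DupAccept B.F h.choose (spoilerMoves ρ) ∧
      ∀ a, spOcc (spoilerMoves ρ) a = dupOcc h.choose (spoilerMoves ρ) a :=
  (h.choose_spec _).2 (spLegalAt_spoilerMoves rfl ρ) (spAccept_spoilerMoves ρ)

lemma Simu.exists_lt_length (ρ : ARun A) (j : ℕ) :
    ∃ n, j < (joinPrefix (resp h.choose (spoilerMoves ρ)) n).length :=
  exists_lt_length_joinPrefix _
    ((h.dupAccept_and_occ ρ).1.mono <| by rintro _ ⟨_, hx, -⟩; exact List.ne_nil_of_mem hx) j

/-- Duplicator's transitions, concatenated over all rounds of the play against `ρ`. -/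
def Simu.dupPairs (ρ : ARun A) : ℕ → α × B.Q := join (h.exists_lt_length ρ)

lemma Simu.isPath_hist_dupPairs (ρ : ARun A) (n : ℕ) :
    IsPath B.δ B.init (hist (h.dupPairs ρ) n) := by
  obtain ⟨M, hM⟩ := h.exists_lt_length ρ n
  have hpath := isPath_joinPrefix_resp (h.dupLegal_resp ρ) M
  rw [← hist_join (h.exists_lt_length ρ)] at hpath
  exact hpath.of_prefix (hist_prefix _ hM.le)

def Simu.runMap (ρ : ARun A) : ARun B :=
  ARun.ofPairs (h.dupPairs ρ) (h.isPath_hist_dupPairs ρ)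
    (infinite_setOf_join _ (h.dupAccept_and_occ ρ).1)

/-- Duplicator's first `n` transitions are fixed once Spoiler's first `M` moves are, for some `M`;
Spoiler's first `M` moves are read off the first `2 (M + 1)` entries of `ρ`. -/
theorem Simu.continuousRF_runMap : ContinuousRF h.runMap := by
  intro ρ n
  obtain ⟨M, hM⟩ := h.exists_lt_length ρ n
  refine ⟨2 * (M + 1), fun ρ' hρ' => ?_⟩
  have hmoves : ∀ i < M, spoilerMoves ρ' i = spoilerMoves ρ i := fun i hi => by
    simp only [spoilerMoves, (eq_of_seqOf_eq hρ' (i := i) (by omega)).2,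
      (eq_of_seqOf_eq hρ' (i := i + 1) (by omega)).1]
  have hjoin : joinPrefix (resp h.choose (spoilerMoves ρ')) M
      = joinPrefix (resp h.choose (spoilerMoves ρ)) M :=
    joinPrefix_congr _ fun m hm => congrArg h.choose (hist_congr fun i hi => hmoves i (by omega))
  exact fun j hj => seqOf_ofPairs_congr (fun i hi => join_congr _ _ hjoin (by omega)) hj

lemma Simu.filter_hist_runMap_prefix (ρ : ARun A) (i : Fin k) (n : ℕ) :
    ∃ N, (hist (h.runMap ρ).val.2 n).filter (· ∈ σ i) <+: (hist ρ.val.2 N).filter (· ∈ σ i) := by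
  obtain ⟨M, hM⟩ := h.exists_lt_length ρ n
  refine ⟨M, ((hist_prefix _ hM.le).filter _).trans ?_⟩
  have hinv := bufs_append_filter_hist (h.dupLegal_resp ρ) i M
  have hword : hist (h.runMap ρ).val.2 (joinPrefix (resp h.choose (spoilerMoves ρ)) M).length
      = (joinPrefix (resp h.choose (spoilerMoves ρ)) M).map Prod.fst := by
    have := congrArg (List.map Prod.fst) (hist_join (h.exists_lt_length ρ) M)
    rwa [← hist_comp] at this
  rw [hword]
  exact ⟨_, hinv.symm⟩

lemma Simu.exists_hist_le_hist_runMap (ρ : ARun A) (n : ℕ) :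
    ∃ N, (hist ρ.val.2 n : Multiset α) ≤ hist (h.runMap ρ).val.2 N :=
  exists_hist_le_hist (fun a => ((h.dupAccept_and_occ ρ).2 a).le.trans
    (encard_le_encard_setOf_join _ _)) n

theorem Simu.tracePres_runMap : TracePres σ h.runMap := fun ρ i =>
  proj_ofInf_eq_of_prefix_of_le (h.filter_hist_runMap_prefix ρ i) (h.exists_hist_le_hist_runMap ρ)

end SimulationMap

theorem exists_continuous_tracePres_of_simu_general {α : Type} {k : ℕ}
    (σ : Fin k → Set α) (A B : NBA α)
    (h : Simu σ (kapAllOmega k) A B) :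
    ∃ f : ARun A → ARun B, ContinuousRF f ∧ TracePres σ f :=
  ⟨h.runMap, h.continuousRF_runMap, h.tracePres_runMap⟩

/-- **Lemma.** If `A ⊑^{κ_ω}_σ B` (Duplicator wins the multi-buffer game with all
buffers unbounded), then there exists a continuous trace-preserving function
`f : ARun(A) → ARun(B)`. -/
theorem exists_continuous_tracePres_of_simu {α : Type} [Fintype α] {k : ℕ}
    (σ : Fin k → Set α) (hcov : ∀ a : α, ∃ i, a ∈ σ i) (A B : NBA α)
    (h : Simu σ (kapAllOmega k) A B) :
    ∃ f : ARun A → ARun B, ContinuousRF f ∧ TracePres σ f :=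
  exists_continuous_tracePres_of_simu_general σ A B h

end MultiBuffer
end
end
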